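/- arXiv:1411.0555 — 2 statements merged into one kernel-verified Lean document; each statement's English description precedes it below -/
import Mathlib

section
/- For every a > 0 and every nonzero complex number x, one has |1 − x|² · exp(−a (log|x|)²) ≤ 4 e^{1/a}. -/
/-- For every `a > 0` and every nonzero complex number `x`,
`|1 − x|² · exp(−a (log|x|)²) ≤ 4 e^{1/a}`. -/
theorem one_sub_sq_mul_gaussian_log_le (a : ℝ) (ha : 0 < a) (x : ℂ) (hx : x ≠ 0) :
    ‖1 - x‖ ^ 2 * Real.exp (-a * (Real.log ‖x‖) ^ 2) ≤ 4 * Real.exp (1 / a) := by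
  set t := Real.log ‖x‖ with ht
  have hr : ‖x‖ = Real.exp t := (Real.exp_log (norm_pos_iff.mpr hx)).symm
  have h1 : ‖1 - x‖ ≤ 2 * Real.exp |t| := by
    calc ‖1 - x‖ ≤ ‖(1 : ℂ)‖ + ‖x‖ := norm_sub_le _ _
      _ = 1 + Real.exp t := by rw [norm_one, hr]
      _ ≤ Real.exp |t| + Real.exp |t| := by
          gcongr
          · exact Real.one_le_exp (abs_nonneg t)
          · exact le_abs_self t
      _ = 2 * Real.exp |t| := by ring
  have h2 : ‖1 - x‖ ^ 2 ≤ 4 * Real.exp (2 * |t|) := by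
    calc ‖1 - x‖ ^ 2 ≤ (2 * Real.exp |t|) ^ 2 := by
          exact pow_le_pow_left₀ (norm_nonneg _) h1 2
      _ = 4 * Real.exp (2 * |t|) := by
          rw [mul_pow, ← Real.exp_nat_mul]; norm_num
  have h3 : 2 * |t| - a * t ^ 2 ≤ 1 / a := by
    rw [le_div_iff₀ ha]
    nlinarith [sq_nonneg (a * |t| - 1), sq_abs t, sq_nonneg a]
  calc ‖1 - x‖ ^ 2 * Real.exp (-a * t ^ 2)
      ≤ 4 * Real.exp (2 * |t|) * Real.exp (-a * t ^ 2) := by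
        gcongr
    _ = 4 * Real.exp (2 * |t| - a * t ^ 2) := by
        rw [mul_assoc, ← Real.exp_add]
        congr 1
        ring
    _ ≤ 4 * Real.exp (1 / a) := by gcongr
end

section
/- Annulus kernel lower bound: For every r > 1 there is a constant A_r > 0, independent of the points involved, such that for all z, γ ∈ ℂ with |γ − z| < r, (1/c_r) ∫_{1<|ζ−z|<r} log(|ζ−γ|²/(4r²)) · log(r²/|ζ−z|²) dA(ζ) ≥ −A_r, where c_r = ∫_{1<|ζ|<r} log(r²/|ζ|²) dA(ζ). -/
/-!
On the annulus `1 < ‖ζ - z‖ < r` the weight `log (r² / ‖ζ - z‖²)` lies in `[0, 2 log r]`, and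
`‖ζ - γ‖ < 2r` makes the first factor nonpositive, so the integrand is at least
`2 log r · log (‖ζ - γ‖² / (2r)²)`. Enlarging the annulus to the ball `B(γ, 2r)` can only decrease
the integral of this nonpositive function, and after translating by `γ` that integral depends on
`r` alone; it is finite because `log ‖·‖` is locally integrable. Finally `c_r ≥ 0`, so multiplying
by `c_r⁻¹` keeps a lower bound uniform in `z` and `γ`.
-/

open MeasureTheory Metric Set Real

theorem posLog_div_le_two_mul_rpow {ρ t : ℝ} (hρ : 0 ≤ ρ) (ht : 0 ≤ t) :
    log⁺ (ρ / t) ≤ 2 * ρ ^ (1 / 2 : ℝ) * t ^ (-(1 / 2) : ℝ) := by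
  have hsqrt : (ρ / t) ^ (1 / 2 : ℝ) = ρ ^ (1 / 2 : ℝ) * t ^ (-(1 / 2) : ℝ) := by
    rw [div_rpow hρ ht, rpow_neg ht, div_eq_mul_inv]
  rw [posLog, max_le_iff, mul_assoc, ← hsqrt]
  refine ⟨by positivity, ?_⟩
  have := log_le_rpow_div (div_nonneg hρ ht) (by norm_num : (0 : ℝ) < 1 / 2)
  linarith

-- `log = log⁺ - log⁺ ∘ inv`: the first part is continuous, the second is `O(‖x‖ ^ (-1/2))`.
theorem locallyIntegrable_log_norm_div {E : Type*} [NormedAddCommGroup E] [NormedSpace ℝ E]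
    [FiniteDimensional ℝ E] [MeasurableSpace E] [BorelSpace E] (μ : Measure E)
    [μ.IsAddHaarMeasure] (hd : 1 ≤ Module.finrank ℝ E) {ρ : ℝ} (hρ : 0 ≤ ρ) :
    LocallyIntegrable (fun x : E => log (‖x‖ / ρ)) μ := by
  have hsplit : (fun x : E => log (‖x‖ / ρ)) = fun x => log⁺ (‖x‖ / ρ) - log⁺ (ρ / ‖x‖) := by
    ext x
    rw [← posLog_sub_posLog_inv, inv_div]
  have hdim : (1 / 2 : ℝ) < Module.finrank ℝ E := by
    have : (1 : ℝ) ≤ Module.finrank ℝ E := by exact_mod_cast hd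
    linarith
  rw [hsplit]
  refine (Continuous.locallyIntegrable (by fun_prop)).sub
    (locallyIntegrable_of_norm_le_rpow (C := 2 * ρ ^ (1 / 2 : ℝ)) hd hdim (ae_of_all _ fun x => ?_)
      (continuous_posLog.measurable.comp (measurable_const.div measurable_norm)).aestronglyMeasurable)
  rw [norm_of_nonneg posLog_nonneg]
  exact posLog_div_le_two_mul_rpow hρ (norm_nonneg x)

theorem preimage_sub_right_ball {E : Type*} [SeminormedAddCommGroup E] (x : E) (ρ : ℝ) :
    (· - x) ⁻¹' ball 0 ρ = ball x ρ := by
  ext y; simp [dist_eq_norm]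

section

variable {E F : Type*} [NormedAddCommGroup E] [MeasurableSpace E]
  [MeasurableAdd E] {μ : Measure E} [μ.IsAddRightInvariant] [NormedAddCommGroup F]

theorem IntegrableOn.comp_sub_right_ball {g : E → F} {ρ : ℝ} (hg : IntegrableOn g (ball 0 ρ) μ)
    (x : E) : IntegrableOn (fun y => g (y - x)) (ball x ρ) μ := by
  rw [← preimage_sub_right_ball]
  exact ((measurePreserving_sub_right μ x).integrableOn_comp_preimage
    (measurableEmbedding_subRight x)).mpr hg

theorem setIntegral_ball_comp_sub_right [NormedSpace ℝ F] (g : E → F) (x : E) (ρ : ℝ) :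
    ∫ y in ball x ρ, g (y - x) ∂μ = ∫ y in ball 0 ρ, g y ∂μ := by
  rw [← preimage_sub_right_ball]
  exact (measurePreserving_sub_right μ x).setIntegral_preimage_emb
    (measurableEmbedding_subRight x) g _

end

theorem log_sq_div_sq_mem_Icc {r s : ℝ} (h1 : 1 ≤ s) (hs : s ≤ r) :
    log (r ^ 2 / s ^ 2) ∈ Icc 0 (2 * log r) := by
  have hs_pos : 0 < s := by linarith
  rw [← div_pow, log_pow, log_div (by linarith : r ≠ 0) hs_pos.ne']
  have hs0 := log_nonneg h1
  have hsr := log_le_log hs_pos hs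
  constructor <;> push_cast <;> linarith

theorem log_sq_div_sq_nonpos {t ρ : ℝ} (ht : 0 ≤ t) (htρ : t ≤ ρ) : log (t ^ 2 / ρ ^ 2) ≤ 0 :=
  log_nonpos (by positivity) (div_le_one_of_le₀ (pow_le_pow_left₀ ht htρ 2) (sq_nonneg ρ))

section

variable {E : Type*} [NormedAddCommGroup E] [NormedSpace ℝ E] [FiniteDimensional ℝ E]
  [MeasurableSpace E] [BorelSpace E] {μ : Measure E} [μ.IsAddHaarMeasure]

theorem integrableOn_log_norm_sq_div_sq (hd : 1 ≤ Module.finrank ℝ E) {ρ : ℝ} (hρ : 0 ≤ ρ)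
    (R : ℝ) : IntegrableOn (fun w : E => log (‖w‖ ^ 2 / ρ ^ 2)) (ball 0 R) μ := by
  simp_rw [← div_pow, log_pow]
  exact (((locallyIntegrable_log_norm_div μ hd hρ).integrableOn_isCompact
    (isCompact_closedBall 0 R)).mono_set ball_subset_closedBall).const_mul _

theorem le_setIntegral_log_mul_log (hd : 1 ≤ Module.finrank ℝ E) {r : ℝ} (hr : 1 < r)
    {z γ : E} (hγ : ‖γ - z‖ < r) :
    2 * log r * ∫ w in ball 0 (2 * r), log (‖w‖ ^ 2 / (2 * r) ^ 2) ∂μ ≤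
      ∫ ζ in {ζ | 1 < ‖ζ - z‖ ∧ ‖ζ - z‖ < r},
        log (‖ζ - γ‖ ^ 2 / (2 * r) ^ 2) * log (r ^ 2 / ‖ζ - z‖ ^ 2) ∂μ := by
  set S := {ζ : E | 1 < ‖ζ - z‖ ∧ ‖ζ - z‖ < r}
  set a : E → ℝ := fun ζ => log (‖ζ - γ‖ ^ 2 / (2 * r) ^ 2)
  have hS : MeasurableSet S := measurableSet_Ioo.preimage (f := (‖· - z‖)) (by fun_prop)
  have hS_ball : S ⊆ ball γ (2 * r) := fun ζ hζ => by
    rw [mem_ball, dist_eq_norm]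
    linarith [norm_sub_le_norm_sub_add_norm_sub ζ z γ, norm_sub_rev γ z, hζ.2]
  have ha_int : IntegrableOn a (ball γ (2 * r)) μ :=
    IntegrableOn.comp_sub_right_ball (integrableOn_log_norm_sq_div_sq hd (by linarith) _) γ
  have ha_nonpos : ∀ ζ ∈ ball γ (2 * r), a ζ ≤ 0 := fun ζ hζ =>
    log_sq_div_sq_nonpos (norm_nonneg _) (by rw [mem_ball, dist_eq_norm] at hζ; exact hζ.le)
  have hweight : ∀ ζ ∈ S, log (r ^ 2 / ‖ζ - z‖ ^ 2) ∈ Icc 0 (2 * log r) := fun ζ hζ =>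
    log_sq_div_sq_mem_Icc hζ.1.le hζ.2.le
  have hball_le_S : ∫ ζ in ball γ (2 * r), a ζ ∂μ ≤ ∫ ζ in S, a ζ ∂μ := by
    have := setIntegral_mono_set ha_int.neg
      ((ae_restrict_mem measurableSet_ball).mono fun ζ hζ => neg_nonneg.2 (ha_nonpos ζ hζ))
      hS_ball.eventuallyLE
    simp only [Pi.neg_apply, integral_neg] at this
    linarith
  have hprod_int : IntegrableOn (fun ζ => a ζ * log (r ^ 2 / ‖ζ - z‖ ^ 2)) S μ :=
    (ha_int.mono_set hS_ball).mul_bdd (c := 2 * log r)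
      (Measurable.log (by fun_prop)).aestronglyMeasurable
      ((ae_restrict_mem hS).mono fun ζ hζ => by
        rw [norm_of_nonneg (hweight ζ hζ).1]; exact (hweight ζ hζ).2)
  calc 2 * log r * ∫ w in ball 0 (2 * r), log (‖w‖ ^ 2 / (2 * r) ^ 2) ∂μ
      = 2 * log r * ∫ ζ in ball γ (2 * r), a ζ ∂μ := by
        rw [setIntegral_ball_comp_sub_right (fun w => log (‖w‖ ^ 2 / (2 * r) ^ 2))]
    _ ≤ 2 * log r * ∫ ζ in S, a ζ ∂μ :=
        mul_le_mul_of_nonneg_left hball_le_S (by have := log_pos hr; positivity)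
    _ = ∫ ζ in S, 2 * log r * a ζ ∂μ := (integral_const_mul _ _).symm
    _ ≤ ∫ ζ in S, a ζ * log (r ^ 2 / ‖ζ - z‖ ^ 2) ∂μ :=
        setIntegral_mono_on ((ha_int.mono_set hS_ball).const_mul _) hprod_int hS fun ζ hζ => by
          rw [mul_comm]
          exact mul_le_mul_of_nonpos_left (hweight ζ hζ).2 (ha_nonpos ζ (hS_ball hζ))

end

/-- Annulus kernel lower bound: for every `r > 1` there is `A_r > 0`,
independent of the points involved, such that for all `z, γ ∈ ℂ` with
`|γ − z| < r`,
`(1/c_r) ∫_{1<|ζ−z|<r} log(|ζ−γ|²/(4r²)) · log(r²/|ζ−z|²) dA(ζ) ≥ −A_r`,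
where `c_r = ∫_{1<|ζ|<r} log(r²/|ζ|²) dA(ζ)`. -/
theorem annulus_kernel_lower_bound (r : ℝ) (hr : 1 < r) :
    ∃ A : ℝ, 0 < A ∧ ∀ z γ : ℂ, ‖γ - z‖ < r →
      (∫ ζ in {ζ : ℂ | 1 < ‖ζ‖ ∧ ‖ζ‖ < r}, Real.log (r ^ 2 / ‖ζ‖ ^ 2))⁻¹ *
          ∫ ζ in {ζ : ℂ | 1 < ‖ζ - z‖ ∧ ‖ζ - z‖ < r},
            Real.log (‖ζ - γ‖ ^ 2 / (4 * r ^ 2)) * Real.log (r ^ 2 / ‖ζ - z‖ ^ 2)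
        ≥ -A := by
  set c := ∫ ζ in {ζ : ℂ | 1 < ‖ζ‖ ∧ ‖ζ‖ < r}, Real.log (r ^ 2 / ‖ζ‖ ^ 2)
  set K := ∫ w in ball (0 : ℂ) (2 * r), log (‖w‖ ^ 2 / (2 * r) ^ 2)
  have hc : 0 ≤ c := setIntegral_nonneg (measurableSet_Ioo.preimage (f := (‖·‖)) (by fun_prop))
    fun ζ hζ => (log_sq_div_sq_mem_Icc hζ.1.le hζ.2.le).1
  have hK : K ≤ 0 := setIntegral_nonpos measurableSet_ball fun w hw =>
    log_sq_div_sq_nonpos (norm_nonneg w) (by rw [mem_ball_zero_iff] at hw; exact hw.le)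
  have hdim : 1 ≤ Module.finrank ℝ ℂ := by simp
  have hA : 0 ≤ c⁻¹ * (2 * log r * -K) :=
    mul_nonneg (inv_nonneg.2 hc) (mul_nonneg (by have := log_pos hr; positivity) (neg_nonneg.2 hK))
  refine ⟨c⁻¹ * (2 * log r * -K) + 1, by linarith, fun z γ hγ => ?_⟩
  rw [show 4 * r ^ 2 = (2 * r) ^ 2 by ring, ge_iff_le]
  have := mul_le_mul_of_nonneg_left (le_setIntegral_log_mul_log hdim hr hγ (μ := volume))
    (inv_nonneg.2 hc)
  linarith
end
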